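/- arXiv:2506.07331 — 2 statements merged into one kernel-verified Lean document; each statement's English description precedes it below -/
import Mathlib

section
/- Let R = (0, l) x (-h, h) be an open rectangle with l, h > 0. Suppose u2 : R -> R is harmonic in R, extends continuously with continuous derivatives up to the boundary, and satisfies u2 = 0 and the normal derivative (partial u2 / partial y) = 0 on the horizontal boundary segments (0, l) x {h} and (0, l) x {-h}. Then u2 is identically zero in R. -/
open Set

/-- Second directional derivative of `f` in direction `v` (applied twice). -/
noncomputable def d2 (f : ℝ × ℝ → ℝ) (v : ℝ × ℝ) (p : ℝ × ℝ) : ℝ :=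
  fderiv ℝ (fun q => fderiv ℝ f q v) p v

/-!
On the rectangle, `g = ∂ₓu - i ∂ᵧu` is holomorphic because `u` is harmonic, and it vanishes on
the top edge: `∂ₓu = 0` there because `u` does, and `∂ᵧu = 0` by hypothesis. Extending `g` by zero
above the edge gives a continuous function that is holomorphic off a horizontal line; its
rectangle integrals vanish (cut each rectangle along the line), so by Morera it is holomorphic,
and the identity theorem forces `g = 0`. Hence `u` is constant on the rectangle, and the constant
is its value `0` on the top edge.
-/

open Complex MeasureTheory Topology Filter InnerProductSpace Laplacian
open scoped Interval

theorem Convex.reProdIm {s t : Set ℝ} (hs : Convex ℝ s) (ht : Convex ℝ t) :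
    Convex ℝ (s ×ℂ t) :=
  (hs.linear_preimage reLm).inter (ht.linear_preimage imLm)

theorem ContinuousOn.intervalIntegrable_vertical {E : Type*} [NormedAddCommGroup E] {f : ℂ → E}
    {z w : ℂ} (hf : ContinuousOn f (Rectangle z w)) {x : ℝ} (hx : x ∈ [[z.re, w.re]]) :
    IntervalIntegrable (fun y : ℝ => f (x + y * I)) volume z.im w.im := by
  refine ContinuousOn.intervalIntegrable (hf.comp (by fun_prop) fun y hy => ?_)
  simpa [Rectangle, mem_reProdIm] using ⟨hx, hy⟩

variable {E : Type*} [NormedAddCommGroup E] [NormedSpace ℂ E]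

theorem wedgeIntegral_add_wedgeIntegral_eq_split {f : ℂ → E} {z w : ℂ}
    (hf : ContinuousOn f (Rectangle z w)) {m : ℝ} (hm : m ∈ [[z.im, w.im]]) :
    wedgeIntegral z w f + wedgeIntegral w z f =
      (wedgeIntegral z ⟨w.re, m⟩ f + wedgeIntegral ⟨w.re, m⟩ z f) +
        (wedgeIntegral ⟨z.re, m⟩ w f + wedgeIntegral w ⟨z.re, m⟩ f) := by
  have hlo : [[z.im, m]] ⊆ [[z.im, w.im]] := uIcc_subset_uIcc left_mem_uIcc hm
  have hhi : [[m, w.im]] ⊆ [[z.im, w.im]] := uIcc_subset_uIcc hm right_mem_uIcc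
  have hz := hf.intervalIntegrable_vertical left_mem_uIcc
  have hw := hf.intervalIntegrable_vertical right_mem_uIcc
  simp only [wedgeIntegral_add_wedgeIntegral_eq]
  rw [← intervalIntegral.integral_add_adjacent_intervals (hz.mono_set hlo) (hz.mono_set hhi),
    ← intervalIntegral.integral_add_adjacent_intervals (hw.mono_set hlo) (hw.mono_set hhi)]
  simp only [smul_add]
  abel

theorem isConservativeOn_of_differentiableOn_diff_im_eq {f : ℂ → E} {U : Set ℂ} {d : ℝ}
    (hc : ContinuousOn f U) (hd : DifferentiableOn ℂ f (U \ {z | z.im = d})) :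
    IsConservativeOn f U := by
  have hoff : ∀ z w, Rectangle z w ⊆ U → d ∉ Ioo (min z.im w.im) (max z.im w.im) →
      wedgeIntegral z w f + wedgeIntegral w z f = 0 := by
    intro z w hzw hdzw
    rw [wedgeIntegral_add_wedgeIntegral_eq]
    refine integral_boundary_rect_eq_zero_of_continuousOn_of_differentiableOn f z w
      (hc.mono hzw) (hd.mono fun p hp => ⟨hzw ?_, ?_⟩)
    · exact reProdIm_subset_iff.2 (prod_mono Ioo_subset_Icc_self Ioo_subset_Icc_self) hp
    · exact fun hpd => hdzw (hpd ▸ (mem_reProdIm.1 hp).2)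
  intro z w hzw
  rw [← add_eq_zero_iff_eq_neg]
  by_cases hdzw : d ∈ Ioo (min z.im w.im) (max z.im w.im)
  · have hm : d ∈ [[z.im, w.im]] := Ioo_subset_Icc_self hdzw
    have hlo : Rectangle z ⟨w.re, d⟩ ⊆ U :=
      (reProdIm_subset_iff.2 (prod_mono subset_rfl (uIcc_subset_uIcc left_mem_uIcc hm))).trans hzw
    have hhi : Rectangle ⟨z.re, d⟩ w ⊆ U :=
      (reProdIm_subset_iff.2 (prod_mono subset_rfl (uIcc_subset_uIcc hm right_mem_uIcc))).trans hzw
    rw [wedgeIntegral_add_wedgeIntegral_eq_split (hc.mono hzw) hm,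
      hoff _ _ hlo (by simpa using le_of_lt), hoff _ _ hhi (by simpa using le_of_lt), add_zero]
  · exact hoff z w hzw hdzw

variable [CompleteSpace E]

theorem differentiableOn_of_differentiableOn_diff_im_eq {f : ℂ → E} {U : Set ℂ} {d : ℝ}
    (hU : IsOpen U) (hc : ContinuousOn f U) (hd : DifferentiableOn ℂ f (U \ {z | z.im = d})) :
    DifferentiableOn ℂ f U :=
  (isConservativeOn_and_continuousOn_iff_isDifferentiableOn hU).1
    ⟨isConservativeOn_of_differentiableOn_diff_im_eq hc hd, hc⟩

theorem eqOn_zero_of_eq_zero_on_upper_edge {f : ℂ → E} {a b c d : ℝ}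
    (hd : DifferentiableOn ℂ f (Ioo a b ×ℂ Ioo c d)) (hc : ContinuousOn f (Ioo a b ×ℂ Ioc c d))
    (h0 : ∀ x ∈ Ioo a b, f (x + d * I) = 0) :
    EqOn f 0 (Ioo a b ×ℂ Ioo c d) := by
  intro p hp
  obtain ⟨hpre, hpim⟩ := mem_reProdIm.1 hp
  let G : ℂ → E := fun z => if z.im ≤ d then f z else 0
  let S : Set ℂ := Ioo a b ×ℂ Ioi c
  have hS : IsOpen S := isOpen_Ioo.reProdIm isOpen_Ioi
  have hGc : ContinuousOn G S := by
    refine ContinuousOn.if (fun z hz => ?_) (hc.mono fun z hz => ?_) continuousOn_const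
    · obtain ⟨hzS, hzd⟩ := hz
      rw [frontier_setOfPred_im_le] at hzd
      have hzd : z.im = d := hzd
      simpa [← hzd] using h0 z.re (mem_reProdIm.1 hzS).1
    · rw [(isClosed_le continuous_im continuous_const).closure_eq] at hz
      obtain ⟨⟨hzre, hzim⟩, hzd : z.im ≤ d⟩ := hz
      exact ⟨hzre, hzim, hzd⟩
  have hGd : DifferentiableOn ℂ G (S \ {z | z.im = d}) := by
    rintro z ⟨hzS, hzd⟩
    obtain ⟨hzre, hzim⟩ := mem_reProdIm.1 hzS
    refine DifferentiableAt.differentiableWithinAt ?_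
    rcases lt_or_gt_of_ne hzd with hlt | hgt
    · have : f =ᶠ[𝓝 z] G := by
        filter_upwards [(isOpen_lt continuous_im continuous_const).mem_nhds hlt] with w hw
        simp [G, hw.le]
      refine (hd.differentiableAt ?_).congr_of_eventuallyEq this.symm
      exact (isOpen_Ioo.reProdIm isOpen_Ioo).mem_nhds (mem_reProdIm.2 ⟨hzre, hzim, hlt⟩)
    · have : (0 : ℂ → E) =ᶠ[𝓝 z] G := by
        filter_upwards [(isOpen_lt continuous_const continuous_im).mem_nhds hgt] with w hw
        simp [G, not_le.2 hw]
      exact (differentiableAt_const 0).congr_of_eventuallyEq this.symm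
  have hGzero : EqOn G 0 S := by
    refine ((differentiableOn_of_differentiableOn_diff_im_eq hS hGc hGd).analyticOnNhd hS)
      |>.eqOn_zero_of_preconnected_of_eventuallyEq_zero
      (((convex_Ioo a b).reProdIm (convex_Ioi c)).isPreconnected) (z₀ := p.re + (d + 1) * I)
      ?_ ?_
    · simpa [S, mem_reProdIm, hpre] using hpim.1.trans (by linarith [hpim.2])
    · filter_upwards [(isOpen_lt continuous_const continuous_im).mem_nhds
        (show d < (p.re + (d + 1) * I).im by simp)] with w hw
      simp [G, not_le.2 hw]
  simpa [G, hpim.2.le] using hGzero (mem_reProdIm.2 ⟨hpre, hpim.1⟩)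

theorem fderiv_apply_one_eq_zero_of_eventually_eq_zero {F : Type*} [NormedAddCommGroup F]
    [NormedSpace ℝ F] {f : ℂ → F} {x y : ℝ} (hf : DifferentiableAt ℝ f (x + y * I))
    (h : ∀ᶠ t : ℝ in 𝓝 x, f (t + y * I) = 0) : fderiv ℝ f (x + y * I) 1 = 0 := by
  have hline : HasDerivAt (fun t : ℝ => f (t + y * I)) (fderiv ℝ f (x + y * I) 1) x := by
    simpa [Function.comp_def] using
      hf.hasFDerivAt.comp_hasDerivAt x (((hasDerivAt_id x).ofReal_comp).add_const _)
  exact hline.unique ((hasDerivAt_const x 0).congr_of_eventuallyEq h)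

theorem fderiv_eq_zero_of_complex_partial_eq_zero {f : ℂ → ℝ} {z : ℂ}
    (h : (fderiv ℝ f z 1 : ℂ) - I * fderiv ℝ f z I = 0) : fderiv ℝ f z = 0 := by
  have h1 : fderiv ℝ f z 1 = 0 := by simpa using congrArg re h
  have hI : fderiv ℝ f z I = 0 := by simpa using congrArg im h
  refine ContinuousLinearMap.coe_injective (basisOneI.ext fun i => ?_)
  fin_cases i <;> simp [h1, hI]

theorem InnerProductSpace.HarmonicOnNhd.eqOn_zero_of_eq_zero_of_fderiv_I_eq_zero {f : ℂ → ℝ}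
    {a b c d : ℝ} (hf : HarmonicOnNhd f (Ioo a b ×ℂ Ioo c d))
    (hf₁ : ∀ z ∈ Ioo a b ×ℂ Ioc c d, ContDiffAt ℝ 1 f z)
    (h0 : ∀ x ∈ Ioo a b, f (x + d * I) = 0)
    (h0' : ∀ x ∈ Ioo a b, fderiv ℝ f (x + d * I) I = 0) :
    EqOn f 0 (Ioo a b ×ℂ Ioo c d) := by
  intro p hp
  obtain ⟨hpre, hpim⟩ := mem_reProdIm.1 hp
  have hedge : ∀ x ∈ Ioo a b, x + d * I ∈ Ioo a b ×ℂ Ioc c d := fun x hx =>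
    mem_reProdIm.2 ⟨by simpa using hx, by simp [hpim.1.trans hpim.2]⟩
  let g : ℂ → ℂ := fun z => (fderiv ℝ f z 1 : ℂ) - I * fderiv ℝ f z I
  have hg_diff : DifferentiableOn ℂ g (Ioo a b ×ℂ Ioo c d) := fun z hz =>
    (HarmonicAt.differentiableAt_complex_partial (hf z hz)).differentiableWithinAt
  have hg_cont : ContinuousOn g (Ioo a b ×ℂ Ioc c d) := fun z hz => by
    have := ((hf₁ z hz).fderiv_right (m := 0) le_rfl).continuousAt
    exact ContinuousAt.continuousWithinAt (by fun_prop)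
  have hg_edge : ∀ x ∈ Ioo a b, g (x + d * I) = 0 := fun x hx => by
    have h1 : fderiv ℝ f (x + d * I) 1 = 0 :=
      fderiv_apply_one_eq_zero_of_eventually_eq_zero
        ((hf₁ _ (hedge x hx)).differentiableAt one_ne_zero)
        (eventually_of_mem (isOpen_Ioo.mem_nhds hx) h0)
    simp [g, h1, h0' x hx]
  have hconst : ∀ z ∈ Ioo a b ×ℂ Ioo c d, f z = f p :=
    fun z hz => (isOpen_Ioo.reProdIm isOpen_Ioo).is_const_of_fderiv_eq_zero
      ((convex_Ioo a b).reProdIm (convex_Ioo c d)).isPreconnected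
      (fun w hw => ((hf w hw).1.differentiableAt two_ne_zero).differentiableWithinAt)
      (fun w hw => fderiv_eq_zero_of_complex_partial_eq_zero
        (eqOn_zero_of_eq_zero_on_upper_edge hg_diff hg_cont hg_edge hw)) hz hp
  have hclosure : (p.re : ℂ) + d * I ∈ closure (Ioo a b ×ℂ Ioo c d) := by
    rw [closure_reProdIm, closure_Ioo (hpre.1.trans hpre.2).ne,
      closure_Ioo (hpim.1.trans hpim.2).ne]
    exact reProdIm_subset_iff.2 (prod_mono Ioo_subset_Icc_self Ioc_subset_Icc_self)
      (hedge p.re hpre)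
  rw [Pi.zero_apply, ← h0 p.re hpre]
  exact (((hf₁ _ (hedge p.re hpre)).continuousAt.continuousWithinAt).eq_const_of_mem_closure
    hclosure hconst).symm

theorem d2_eq_iteratedFDeriv {f : ℝ × ℝ → ℝ} {p : ℝ × ℝ} (hf : ContDiffAt ℝ 2 f p)
    (v : ℝ × ℝ) : d2 f v p = iteratedFDeriv ℝ 2 f p ![v, v] := by
  have hdf : DifferentiableAt ℝ (fderiv ℝ f) p :=
    (hf.fderiv_right (m := 1) (by norm_num)).differentiableAt one_ne_zero
  rw [iteratedFDeriv_two_apply, d2, fderiv_clm_apply hdf (differentiableAt_const v)]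
  simp

theorem laplacian_comp_equivRealProdCLM {u : ℝ × ℝ → ℝ} {z : ℂ}
    (hu : ContDiffAt ℝ 2 u (equivRealProdCLM z)) :
    Δ (u ∘ equivRealProdCLM) z =
      d2 u (1, 0) (equivRealProdCLM z) + d2 u (0, 1) (equivRealProdCLM z) := by
  have h := equivRealProdCLM.iteratedFDerivWithin_comp_right u uniqueDiffOn_univ
    (mem_univ (equivRealProdCLM z)) 2
  rw [preimage_univ, iteratedFDerivWithin_univ, iteratedFDerivWithin_univ] at h
  rw [laplacian_eq_iteratedFDeriv_complexPlane]
  beta_reduce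
  rw [h, d2_eq_iteratedFDeriv hu, d2_eq_iteratedFDeriv hu]
  simp only [ContinuousMultilinearMap.compContinuousLinearMap_apply]
  congr 2 <;> ext i <;> fin_cases i <;> simp

theorem fderiv_comp_equivRealProdCLM {F : Type*} [NormedAddCommGroup F] [NormedSpace ℝ F]
    (u : ℝ × ℝ → F) (z w : ℂ) :
    fderiv ℝ (u ∘ equivRealProdCLM) z w =
      fderiv ℝ u (equivRealProdCLM z) (equivRealProdCLM w) := by
  rw [equivRealProdCLM.comp_right_fderiv]; rfl

theorem harmonicOnNhd_comp_equivRealProdCLM {u : ℝ × ℝ → ℝ} {s : Set (ℝ × ℝ)} (hs : IsOpen s)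
    (hu : ContDiffOn ℝ 2 u s) (hΔ : ∀ p ∈ s, d2 u (1, 0) p + d2 u (0, 1) p = 0) :
    HarmonicOnNhd (u ∘ equivRealProdCLM) (equivRealProdCLM ⁻¹' s) := by
  intro z hz
  have hu' : ∀ w ∈ equivRealProdCLM ⁻¹' s, ContDiffAt ℝ 2 u (equivRealProdCLM w) :=
    fun w hw => hu.contDiffAt (hs.mem_nhds hw)
  refine ⟨(hu' z hz).comp z equivRealProdCLM.contDiff.contDiffAt, ?_⟩
  filter_upwards [(hs.preimage equivRealProdCLM.continuous).mem_nhds hz] with w hw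
  rw [laplacian_comp_equivRealProdCLM (hu' w hw)]
  exact hΔ _ hw

theorem stmt_3_general (l h : ℝ)
    (u2 : ℝ × ℝ → ℝ) (U : Set (ℝ × ℝ)) (hU : IsOpen U)
    (hcl : closure (Ioo 0 l ×ˢ Ioo (-h) h) ⊆ U)
    (hsm : ContDiffOn ℝ 2 u2 U)
    (hharm : ∀ p ∈ Ioo 0 l ×ˢ Ioo (-h) h, d2 u2 (1, 0) p + d2 u2 (0, 1) p = 0)
    (hb : ∀ x ∈ Ioo 0 l,
      u2 (x, h) = 0 ∧ u2 (x, -h) = 0 ∧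
      fderiv ℝ u2 (x, h) (0, 1) = 0 ∧ fderiv ℝ u2 (x, -h) (0, 1) = 0) :
    ∀ p ∈ Ioo 0 l ×ˢ Ioo (-h) h, u2 p = 0 := by
  intro p hp
  have hR : IsOpen (Ioo 0 l ×ˢ Ioo (-h) h) := isOpen_Ioo.prod isOpen_Ioo
  have harm := harmonicOnNhd_comp_equivRealProdCLM hR (hsm.mono (subset_closure.trans hcl)) hharm
  have hU' : ∀ z ∈ Ioo 0 l ×ℂ Ioc (-h) h, equivRealProdCLM z ∈ U := by
    rintro z ⟨hre, him⟩
    apply hcl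
    rw [closure_prod_eq]
    exact ⟨subset_closure hre, by simpa using Ioc_subset_closure_interior (-h) h him⟩
  have hzero := harm.eqOn_zero_of_eq_zero_of_fderiv_I_eq_zero
    (fun z hz => ((hsm.contDiffAt (hU.mem_nhds (hU' z hz))).comp z
      equivRealProdCLM.contDiff.contDiffAt).of_le one_le_two)
    (fun x hx => by simpa using (hb x hx).1)
    (fun x hx => by simpa [fderiv_comp_equivRealProdCLM] using (hb x hx).2.2.1)
  simpa using hzero (x := equivRealProdCLM.symm p) (by simpa [mem_reProdIm] using hp)

/-- A harmonic function on the rectangle `(0,l) × (-h,h)`, smooth up to the boundary,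
vanishing together with its normal derivative on the two horizontal boundary segments,
is identically zero in the rectangle. -/
theorem stmt_3 (l h : ℝ) (hl : 0 < l) (hh : 0 < h)
    (u2 : ℝ × ℝ → ℝ) (U : Set (ℝ × ℝ)) (hU : IsOpen U)
    (hcl : closure (Ioo 0 l ×ˢ Ioo (-h) h) ⊆ U)
    (hsm : ContDiffOn ℝ 2 u2 U)
    (hharm : ∀ p ∈ Ioo 0 l ×ˢ Ioo (-h) h, d2 u2 (1, 0) p + d2 u2 (0, 1) p = 0)
    (hb : ∀ x ∈ Ioo 0 l,
      u2 (x, h) = 0 ∧ u2 (x, -h) = 0 ∧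
      fderiv ℝ u2 (x, h) (0, 1) = 0 ∧ fderiv ℝ u2 (x, -h) (0, 1) = 0) :
    ∀ p ∈ Ioo 0 l ×ˢ Ioo (-h) h, u2 p = 0 :=
  stmt_3_general l h u2 U hU hcl hsm hharm hb
end

section
/- Let Omega_R = B_R \ closure(B_1) be the planar annulus with outer radius R > 1 and inner radius 1. The Taylor-Couette velocity field v0(xi) = (rho - 1/rho) * theta-hat, where (rho, theta) are polar coordinates and theta-hat = (-sin theta, cos theta), is a harmonic, divergence-free vector field on Omega_R that vanishes on the inner circle partial B_1 but is not identically zero in Omega_R. -/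
open Set

/-- First component of the Taylor–Couette field `v0(x,y) = (1 - 1/(x²+y²)) (-y, x)`. -/
noncomputable def tc1 (p : ℝ × ℝ) : ℝ := (1 - 1 / (p.1 ^ 2 + p.2 ^ 2)) * (-p.2)

/-- Second component of the Taylor–Couette field. -/
noncomputable def tc2 (p : ℝ × ℝ) : ℝ := (1 - 1 / (p.1 ^ 2 + p.2 ^ 2)) * p.1

/-!
Identifying `ℝ × ℝ` with `ℂ`, the components of the Taylor–Couette field are
`tc1 = Re (i (z + 1/z))` and `tc2 = Im (i (z - 1/z))`, real-linear images of functions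
holomorphic on `ℂ \ {0}`. For such a function `L ∘ f`, the second derivative in the direction
`w` is `L (f'' w²)`, so the Laplacian is `L (f'' · 1² + f'' · i²) = 0`. Likewise
`∂ₓ tc1 + ∂ᵧ tc2 = Re (f₁') + Im (i f₂') = Re (f₁' + f₂') = Re (2i) = 0`.
-/

open Complex Filter Topology

noncomputable def onPlane (L : ℂ →L[ℝ] ℝ) (f : ℂ → ℂ) (q : ℝ × ℝ) : ℝ :=
  L (f (equivRealProdCLM.symm q))

section OnPlane

variable (L : ℂ →L[ℝ] ℝ) {f : ℂ → ℂ} {p : ℝ × ℝ}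

local notation "toℂ" => equivRealProdCLM.symm

theorem fderiv_onPlane_apply (hf : DifferentiableAt ℂ f (toℂ p)) (v : ℝ × ℝ) :
    fderiv ℝ (onPlane L f) p v = L (deriv f (toℂ p) * toℂ v) := by
  have h := L.hasFDerivAt.comp p
    (hf.hasDerivAt.comp_hasFDerivAt p equivRealProdCLM.symm.hasFDerivAt)
  rw [show onPlane L f = L ∘ f ∘ toℂ from rfl, h.fderiv]
  simp

theorem d2_onPlane (hf : AnalyticAt ℂ f (toℂ p)) (v : ℝ × ℝ) :
    d2 (onPlane L f) v p = L (deriv (deriv f) (toℂ p) * toℂ v ^ 2) := by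
  have hfderiv : (fun q => fderiv ℝ (onPlane L f) q v)
      =ᶠ[𝓝 p] onPlane L fun w => deriv f w * toℂ v :=
    (equivRealProdCLM.symm.continuous.continuousAt.eventually hf.eventually_analyticAt).mono
      fun q hq => fderiv_onPlane_apply L hq.differentiableAt v
  rw [d2, hfderiv.fderiv_eq, fderiv_onPlane_apply L (hf.deriv.differentiableAt.mul_const _),
    deriv_mul_const hf.deriv.differentiableAt]
  ring_nf

theorem d2_onPlane_add_d2_onPlane (hf : AnalyticAt ℂ f (toℂ p)) :
    d2 (onPlane L f) (1, 0) p + d2 (onPlane L f) (0, 1) p = 0 := by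
  rw [d2_onPlane L hf, d2_onPlane L hf]
  simp [equivRealProdCLM_symm_apply]

end OnPlane

noncomputable def rotJoukowsky (c z : ℂ) : ℂ := I * (z + c * z⁻¹)

theorem hasDerivAt_rotJoukowsky (c : ℂ) {z : ℂ} (hz : z ≠ 0) :
    HasDerivAt (rotJoukowsky c) (I * (1 - c * (z ^ 2)⁻¹)) z :=
  (((hasDerivAt_id' z).add ((hasDerivAt_inv hz).const_mul c)).const_mul I).congr_deriv
    (by ring)

theorem analyticAt_rotJoukowsky (c : ℂ) {z : ℂ} (hz : z ≠ 0) :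
    AnalyticAt ℂ (rotJoukowsky c) z := by
  unfold rotJoukowsky
  fun_prop (disch := assumption)

theorem tc1_eq_onPlane : tc1 = onPlane reCLM (rotJoukowsky 1) := by
  ext q
  simp [tc1, onPlane, rotJoukowsky, equivRealProdCLM_symm_apply, inv_im, normSq]
  ring

theorem tc2_eq_onPlane : tc2 = onPlane imCLM (rotJoukowsky (-1)) := by
  ext q
  simp [tc2, onPlane, rotJoukowsky, equivRealProdCLM_symm_apply, inv_re, normSq]
  ring

/-- On the annulus `Ω_R = B_R \ closure B_1` (outer radius `R > 1`), the Taylor–Couette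
velocity field is harmonic and divergence-free, vanishes on the inner circle `∂B_1`,
but is not identically zero in `Ω_R`. -/
theorem stmt_6 (R : ℝ) (hR : 1 < R) :
    (∀ p ∈ {p : ℝ × ℝ | 1 < p.1 ^ 2 + p.2 ^ 2 ∧ p.1 ^ 2 + p.2 ^ 2 < R ^ 2},
      d2 tc1 (1, 0) p + d2 tc1 (0, 1) p = 0 ∧
      d2 tc2 (1, 0) p + d2 tc2 (0, 1) p = 0 ∧
      fderiv ℝ tc1 p (1, 0) + fderiv ℝ tc2 p (0, 1) = 0) ∧
    (∀ p : ℝ × ℝ, p.1 ^ 2 + p.2 ^ 2 = 1 → tc1 p = 0 ∧ tc2 p = 0) ∧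
    (∃ p ∈ {p : ℝ × ℝ | 1 < p.1 ^ 2 + p.2 ^ 2 ∧ p.1 ^ 2 + p.2 ^ 2 < R ^ 2},
      tc1 p ≠ 0 ∨ tc2 p ≠ 0) := by
  refine ⟨fun p ⟨hp, _⟩ => ?_, fun p hp => by simp [tc1, tc2, hp], ?_⟩
  · have hz : equivRealProdCLM.symm p ≠ 0 := by
      rw [map_ne_zero_iff _ equivRealProdCLM.symm.injective]
      rintro rfl
      norm_num at hp
    have hderiv (c : ℂ) := hasDerivAt_rotJoukowsky c hz
    rw [tc1_eq_onPlane, tc2_eq_onPlane]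
    refine ⟨d2_onPlane_add_d2_onPlane _ (analyticAt_rotJoukowsky _ hz),
      d2_onPlane_add_d2_onPlane _ (analyticAt_rotJoukowsky _ hz), ?_⟩
    rw [fderiv_onPlane_apply _ (hderiv 1).differentiableAt,
      fderiv_onPlane_apply _ (hderiv (-1)).differentiableAt, (hderiv 1).deriv, (hderiv (-1)).deriv]
    simp [equivRealProdCLM_symm_apply]
  · obtain ⟨s, hs, hsR⟩ := exists_between hR
    refine ⟨(s, 0), ⟨by nlinarith, by nlinarith⟩, Or.inr ?_⟩
    have hinv : 1 / (s ^ 2 + 0 ^ 2) < 1 := by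
      rw [div_lt_one (by positivity)]
      nlinarith
    exact mul_ne_zero (by linarith) (by linarith)
end
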